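/- Let h(x₁,x₂,ẋ₁,ẋ₂) = f + λ₀·g where f = (1/3)(ln(3(x₁²+x₂²)+2)/(x₁²+x₂²))(x₁ẋ₂ - x₂ẋ₁), g is the Berwald length integrand, and λ₀ = -2a(1-a²)^(5/2)/(6a⁴+7a²+2). Along c₀(t) = (a cos t, a sin t), 0 < a < 1, the quadratic form Σ_{i,j} h_{ẋᵢẋⱼ} yᵢyⱼ equals (λ₀(2a²+1)/(a(1-a²)^(5/2)))·(cos(t)y₁ + sin(t)y₂)², and hence is negative for all y ∈ ℝ² with cos(t)y₁ + sin(t)y₂ ≠ 0. -/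

import Mathlib

open Real

noncomputable def areaIntegrand (x₁ x₂ v₁ v₂ : ℝ) : ℝ :=
  (1/3) * (Real.log (3*(x₁^2 + x₂^2) + 2) / (x₁^2 + x₂^2)) * (x₁ * v₂ - x₂ * v₁)

noncomputable def lengthIntegrand (x₁ x₂ v₁ v₂ : ℝ) : ℝ :=
  ((1 - x₁^2 - x₂^2) * (v₁^2 + v₂^2) + 2 * (x₁*v₁ + x₂*v₂)^2) /
    ((1 - x₁^2 - x₂^2)^2 *
      Real.sqrt ((1 - x₁^2 - x₂^2) * (v₁^2 + v₂^2) + (x₁*v₁ + x₂*v₂)^2))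

noncomputable def hInt (lam : ℝ) (x₁ x₂ v₁ v₂ : ℝ) : ℝ :=
  areaIntegrand x₁ x₂ v₁ v₂ + lam * lengthIntegrand x₁ x₂ v₁ v₂

/-- Second partial derivatives of `h` in the velocity variables, evaluated at
(x₁, x₂, v₁, v₂). -/
noncomputable def H11 (lam x₁ x₂ v₁ v₂ : ℝ) : ℝ :=
  deriv (fun u => deriv (fun w => hInt lam x₁ x₂ w v₂) u) v₁

noncomputable def H12 (lam x₁ x₂ v₁ v₂ : ℝ) : ℝ :=
  deriv (fun u => deriv (fun w => hInt lam x₁ x₂ u w) v₂) v₁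

noncomputable def H21 (lam x₁ x₂ v₁ v₂ : ℝ) : ℝ :=
  deriv (fun w => deriv (fun u => hInt lam x₁ x₂ u w) v₁) v₂

noncomputable def H22 (lam x₁ x₂ v₁ v₂ : ℝ) : ℝ :=
  deriv (fun w => deriv (fun u => hInt lam x₁ x₂ v₁ u) w) v₂

open Topology Filter
noncomputable def AAx (p q : ℝ) : ℝ := 1 - p^2 - q^2
noncomputable def SSx (p q v₁ v₂ : ℝ) : ℝ := p*v₁ + q*v₂
noncomputable def QQx (p q v₁ v₂ : ℝ) : ℝ := AAx p q * (v₁^2 + v₂^2) + SSx p q v₁ v₂ ^ 2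
noncomputable def NNx (p q v₁ v₂ : ℝ) : ℝ := AAx p q * (v₁^2 + v₂^2) + 2 * SSx p q v₁ v₂ ^ 2
noncomputable def dN1x (p q v₁ v₂ : ℝ) : ℝ := 2 * AAx p q * v₁ + 4 * p * SSx p q v₁ v₂
noncomputable def dQ1x (p q v₁ v₂ : ℝ) : ℝ := 2 * AAx p q * v₁ + 2 * p * SSx p q v₁ v₂
noncomputable def dN2x (p q v₁ v₂ : ℝ) : ℝ := 2 * AAx p q * v₂ + 4 * q * SSx p q v₁ v₂
noncomputable def dQ2x (p q v₁ v₂ : ℝ) : ℝ := 2 * AAx p q * v₂ + 2 * q * SSx p q v₁ v₂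

noncomputable def G1x (p q v₁ v₂ : ℝ) : ℝ :=
  (dN1x p q v₁ v₂ * QQx p q v₁ v₂ - NNx p q v₁ v₂ * dQ1x p q v₁ v₂ / 2) /
    (AAx p q ^ 2 * QQx p q v₁ v₂ * Real.sqrt (QQx p q v₁ v₂))

noncomputable def G2x (p q v₁ v₂ : ℝ) : ℝ :=
  (dN2x p q v₁ v₂ * QQx p q v₁ v₂ - NNx p q v₁ v₂ * dQ2x p q v₁ v₂ / 2) /
    (AAx p q ^ 2 * QQx p q v₁ v₂ * Real.sqrt (QQx p q v₁ v₂))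

noncomputable def aS1 (p q : ℝ) : ℝ := (1/3) * (Real.log (3*(p^2+q^2)+2)/(p^2+q^2)) * (0 - q * 1)
noncomputable def aS2 (p q : ℝ) : ℝ := (1/3) * (Real.log (3*(p^2+q^2)+2)/(p^2+q^2)) * (p * 1)

lemma L1 {N Q : ℝ → ℝ} {dN dQ nv qv K x : ℝ} (hN : HasDerivAt N dN x) (hnv : N x = nv)
    (hQ : HasDerivAt Q dQ x) (hqv : Q x = qv) (h0 : 0 < qv) (hK : K ≠ 0) :
    HasDerivAt (fun w => N w / (K * Real.sqrt (Q w)))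
      ((dN * qv - nv * dQ / 2) / (K * qv * Real.sqrt qv)) x := by
  subst hqv hnv
  have hs0 : (0:ℝ) < Real.sqrt (Q x) := Real.sqrt_pos.2 h0
  have hs : HasDerivAt (fun w => Real.sqrt (Q w)) (1 / (2 * Real.sqrt (Q x)) * dQ) x :=
    (Real.hasDerivAt_sqrt h0.ne').comp x hQ
  have hD : HasDerivAt (fun w => K * Real.sqrt (Q w)) (K * (1 / (2 * Real.sqrt (Q x)) * dQ)) x :=
    hs.const_mul K
  have hDne : K * Real.sqrt (Q x) ≠ 0 := mul_ne_zero hK hs0.ne'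
  have h := hN.div hD hDne
  refine h.congr_deriv (Eq.symm ?_)
  have h2 : Real.sqrt (Q x) * Real.sqrt (Q x) = Q x := Real.mul_self_sqrt h0.le
  field_simp
  ring_nf
  linear_combination (-N x * dQ) * h2

lemma L2 {P Q : ℝ → ℝ} {dP dQ pv qv K x : ℝ} (hP : HasDerivAt P dP x) (hpv : P x = pv)
    (hQ : HasDerivAt Q dQ x) (hqv : Q x = qv) (h0 : 0 < qv) (hK : K ≠ 0) :
    HasDerivAt (fun u => P u / (K * Q u * Real.sqrt (Q u)))
      ((dP * qv - (3/2) * pv * dQ) / (K * qv^2 * Real.sqrt qv)) x := by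
  subst hqv hpv
  have hs0 : (0:ℝ) < Real.sqrt (Q x) := Real.sqrt_pos.2 h0
  have hs : HasDerivAt (fun w => Real.sqrt (Q w)) (1 / (2 * Real.sqrt (Q x)) * dQ) x :=
    (Real.hasDerivAt_sqrt h0.ne').comp x hQ
  have hD : HasDerivAt (fun w => K * Q w * Real.sqrt (Q w))
      ((K * dQ) * Real.sqrt (Q x) + (K * Q x) * (1 / (2 * Real.sqrt (Q x)) * dQ)) x :=
    (hQ.const_mul K).mul hs
  have hDne : K * Q x * Real.sqrt (Q x) ≠ 0 := mul_ne_zero (mul_ne_zero hK h0.ne') hs0.ne'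
  have h := hP.div hD hDne
  refine h.congr_deriv (Eq.symm ?_)
  have h2 : Real.sqrt (Q x) * Real.sqrt (Q x) = Q x := Real.mul_self_sqrt h0.le
  field_simp
  ring_nf
  linear_combination (-P x * dQ) * h2

section components
variable (p q c u : ℝ)

lemma hS1 : HasDerivAt (fun w => SSx p q w c) p u := by
  have : HasDerivAt (fun w : ℝ => p * w + q * c) (p * 1) u :=
    ((hasDerivAt_id u).const_mul p).add_const _
  simpa [SSx] using this

lemma hS2 : HasDerivAt (fun w => SSx p q c w) q u := by
  have : HasDerivAt (fun w : ℝ => q * w + p * c) (q * 1) u :=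
    ((hasDerivAt_id u).const_mul q).add_const _
  have h2 : (fun w => SSx p q c w) = (fun w : ℝ => q * w + p * c) := by
    funext w; simp only [SSx]; ring
  rw [h2]; simpa using this

lemma hsq1 : HasDerivAt (fun w : ℝ => w^2 + c^2) (2*u) u := by
  simpa using (hasDerivAt_pow 2 u).add_const (c^2)

lemma hN1 : HasDerivAt (fun w => NNx p q w c) (dN1x p q u c) u := by
  have h := ((hsq1 c u).const_mul (AAx p q)).add (((hS1 p q c u).pow 2).const_mul 2)
  have h2 : (fun w => NNx p q w c) = fun w => AAx p q * (w^2 + c^2) + 2 * SSx p q w c ^ 2 := rfl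
  rw [h2]
  refine h.congr_deriv (Eq.symm ?_)
  simp [dN1x]; ring

lemma hQ1 : HasDerivAt (fun w => QQx p q w c) (dQ1x p q u c) u := by
  have h := ((hsq1 c u).const_mul (AAx p q)).add ((hS1 p q c u).pow 2)
  have h2 : (fun w => QQx p q w c) = fun w => AAx p q * (w^2 + c^2) + SSx p q w c ^ 2 := rfl
  rw [h2]
  refine h.congr_deriv (Eq.symm ?_)
  simp [dQ1x]; ring

lemma hN2 : HasDerivAt (fun w => NNx p q c w) (dN2x p q c u) u := by
  have h := ((hsq1 c u).const_mul (AAx p q)).add (((hS2 p q c u).pow 2).const_mul 2)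
  have h2 : (fun w => NNx p q c w) = fun w => AAx p q * (w^2 + c^2) + 2 * SSx p q c w ^ 2 := by
    funext w; simp only [NNx]; ring
  rw [h2]
  refine h.congr_deriv (Eq.symm ?_)
  simp [dN2x]; ring

lemma hQ2 : HasDerivAt (fun w => QQx p q c w) (dQ2x p q c u) u := by
  have h := ((hsq1 c u).const_mul (AAx p q)).add ((hS2 p q c u).pow 2)
  have h2 : (fun w => QQx p q c w) = fun w => AAx p q * (w^2 + c^2) + SSx p q c w ^ 2 := by
    funext w; simp only [QQx]; ring
  rw [h2]
  refine h.congr_deriv (Eq.symm ?_)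
  simp [dQ2x]; ring

lemma hdN1_1 : HasDerivAt (fun w => dN1x p q w c) (2 * AAx p q + 4 * p * p) u := by
  have h := ((hasDerivAt_id u).const_mul (2 * AAx p q)).add ((hS1 p q c u).const_mul (4*p))
  have h2 : (fun w => dN1x p q w c) = fun w => 2 * AAx p q * w + 4 * p * SSx p q w c := rfl
  rw [h2]; refine h.congr_deriv (Eq.symm ?_); ring

lemma hdQ1_1 : HasDerivAt (fun w => dQ1x p q w c) (2 * AAx p q + 2 * p * p) u := by
  have h := ((hasDerivAt_id u).const_mul (2 * AAx p q)).add ((hS1 p q c u).const_mul (2*p))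
  have h2 : (fun w => dQ1x p q w c) = fun w => 2 * AAx p q * w + 2 * p * SSx p q w c := rfl
  rw [h2]; refine h.congr_deriv (Eq.symm ?_); ring

lemma hdN2_1 : HasDerivAt (fun w => dN2x p q w c) (4 * q * p) u := by
  have h := (hasDerivAt_const u (2 * AAx p q * c)).add ((hS1 p q c u).const_mul (4*q))
  have h2 : (fun w => dN2x p q w c) = fun w => 2 * AAx p q * c + 4 * q * SSx p q w c := rfl
  rw [h2]; refine h.congr_deriv (Eq.symm ?_); ring

lemma hdQ2_1 : HasDerivAt (fun w => dQ2x p q w c) (2 * q * p) u := by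
  have h := (hasDerivAt_const u (2 * AAx p q * c)).add ((hS1 p q c u).const_mul (2*q))
  have h2 : (fun w => dQ2x p q w c) = fun w => 2 * AAx p q * c + 2 * q * SSx p q w c := rfl
  rw [h2]; refine h.congr_deriv (Eq.symm ?_); ring

lemma hdN2_2 : HasDerivAt (fun w => dN2x p q c w) (2 * AAx p q + 4 * q * q) u := by
  have h := ((hasDerivAt_id u).const_mul (2 * AAx p q)).add ((hS2 p q c u).const_mul (4*q))
  have h2 : (fun w => dN2x p q c w) = fun w => 2 * AAx p q * w + 4 * q * SSx p q c w := rfl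
  rw [h2]; refine h.congr_deriv (Eq.symm ?_); ring

lemma hdQ2_2 : HasDerivAt (fun w => dQ2x p q c w) (2 * AAx p q + 2 * q * q) u := by
  have h := ((hasDerivAt_id u).const_mul (2 * AAx p q)).add ((hS2 p q c u).const_mul (2*q))
  have h2 : (fun w => dQ2x p q c w) = fun w => 2 * AAx p q * w + 2 * q * SSx p q c w := rfl
  rw [h2]; refine h.congr_deriv (Eq.symm ?_); ring

lemma hdN1_2 : HasDerivAt (fun w => dN1x p q c w) (4 * p * q) u := by
  have h := (hasDerivAt_const u (2 * AAx p q * c)).add ((hS2 p q c u).const_mul (4*p))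
  have h2 : (fun w => dN1x p q c w) = fun w => 2 * AAx p q * c + 4 * p * SSx p q c w := rfl
  rw [h2]; refine h.congr_deriv (Eq.symm ?_); ring

lemma hdQ1_2 : HasDerivAt (fun w => dQ1x p q c w) (2 * p * q) u := by
  have h := (hasDerivAt_const u (2 * AAx p q * c)).add ((hS2 p q c u).const_mul (2*p))
  have h2 : (fun w => dQ1x p q c w) = fun w => 2 * AAx p q * c + 2 * p * SSx p q c w := rfl
  rw [h2]; refine h.congr_deriv (Eq.symm ?_); ring

end components

lemma area1 (p q c u : ℝ) : HasDerivAt (fun w => areaIntegrand p q w c) (aS1 p q) u := by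
  have h0 : HasDerivAt (fun w : ℝ => p * c - q * w) (0 - q * 1) u :=
    (hasDerivAt_const u (p*c)).sub ((hasDerivAt_id u).const_mul q)
  exact h0.const_mul _

lemma area2 (p q c u : ℝ) : HasDerivAt (fun w => areaIntegrand p q c w) (aS2 p q) u := by
  have h0 : HasDerivAt (fun w : ℝ => p * w - q * c) (p * 1) u :=
    ((hasDerivAt_id u).const_mul p).sub_const _
  exact h0.const_mul _

lemma hint1 (lam p q c u : ℝ) (hA : AAx p q ≠ 0) (hQpos : 0 < QQx p q u c) :
    HasDerivAt (fun w => hInt lam p q w c) (aS1 p q + lam * G1x p q u c) u := by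
  have hl : HasDerivAt (fun w => lengthIntegrand p q w c) (G1x p q u c) u :=
    L1 (hN1 p q c u) rfl (hQ1 p q c u) rfl hQpos (pow_ne_zero 2 hA)
  exact (area1 p q c u).add (hl.const_mul lam)

lemma hint2 (lam p q c u : ℝ) (hA : AAx p q ≠ 0) (hQpos : 0 < QQx p q c u) :
    HasDerivAt (fun w => hInt lam p q c w) (aS2 p q + lam * G2x p q c u) u := by
  have hl : HasDerivAt (fun w => lengthIntegrand p q c w) (G2x p q c u) u :=
    L1 (hN2 p q c u) rfl (hQ2 p q c u) rfl hQpos (pow_ne_zero 2 hA)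
  exact (area2 p q c u).add (hl.const_mul lam)

lemma outH11 (lam p q v₁ v₂ : ℝ) (hA : 0 < AAx p q) (hv : 0 < QQx p q v₁ v₂) :
    H11 lam p q v₁ v₂ =
      lam * ((((2 * AAx p q + 4*p*p) * QQx p q v₁ v₂ + dN1x p q v₁ v₂ * dQ1x p q v₁ v₂
          - (dN1x p q v₁ v₂ * dQ1x p q v₁ v₂ + NNx p q v₁ v₂ * (2 * AAx p q + 2*p*p)) / 2)
            * QQx p q v₁ v₂
          - (3/2) * (dN1x p q v₁ v₂ * QQx p q v₁ v₂ - NNx p q v₁ v₂ * dQ1x p q v₁ v₂ / 2)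
            * dQ1x p q v₁ v₂)
        / (AAx p q ^ 2 * QQx p q v₁ v₂ ^ 2 * Real.sqrt (QQx p q v₁ v₂))) := by
  unfold H11
  have hc : ContinuousAt (fun u => QQx p q u v₂) v₁ := by
    simp only [QQx, AAx, SSx]; fun_prop
  have hev : ∀ᶠ u in 𝓝 v₁, 0 < QQx p q u v₂ := hc.eventually (eventually_gt_nhds hv)
  have heq : (fun u => deriv (fun w => hInt lam p q w v₂) u) =ᶠ[nhds v₁]
      (fun u => aS1 p q + lam * G1x p q u v₂) :=
    hev.mono fun u hu => (hint1 lam p q v₂ u hA.ne' hu).deriv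
  rw [heq.deriv_eq]
  have hP : HasDerivAt
      (fun u => dN1x p q u v₂ * QQx p q u v₂ - NNx p q u v₂ * dQ1x p q u v₂ / 2)
      ((2 * AAx p q + 4*p*p) * QQx p q v₁ v₂ + dN1x p q v₁ v₂ * dQ1x p q v₁ v₂
        - (dN1x p q v₁ v₂ * dQ1x p q v₁ v₂ + NNx p q v₁ v₂ * (2 * AAx p q + 2*p*p)) / 2) v₁ :=
    ((hdN1_1 p q v₂ v₁).mul (hQ1 p q v₂ v₁)).sub
      (((hN1 p q v₂ v₁).mul (hdQ1_1 p q v₂ v₁)).div_const 2)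
  have hL := L2 hP rfl (hQ1 p q v₂ v₁) rfl hv (pow_ne_zero 2 hA.ne')
  exact ((hL.const_mul lam).const_add (aS1 p q)).deriv

lemma outH12 (lam p q v₁ v₂ : ℝ) (hA : 0 < AAx p q) (hv : 0 < QQx p q v₁ v₂) :
    H12 lam p q v₁ v₂ =
      lam * (((4*q*p * QQx p q v₁ v₂ + dN2x p q v₁ v₂ * dQ1x p q v₁ v₂
          - (dN1x p q v₁ v₂ * dQ2x p q v₁ v₂ + NNx p q v₁ v₂ * (2*q*p)) / 2)
            * QQx p q v₁ v₂
          - (3/2) * (dN2x p q v₁ v₂ * QQx p q v₁ v₂ - NNx p q v₁ v₂ * dQ2x p q v₁ v₂ / 2)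
            * dQ1x p q v₁ v₂)
        / (AAx p q ^ 2 * QQx p q v₁ v₂ ^ 2 * Real.sqrt (QQx p q v₁ v₂))) := by
  unfold H12
  have hc : ContinuousAt (fun u => QQx p q u v₂) v₁ := by
    simp only [QQx, AAx, SSx]; fun_prop
  have hev : ∀ᶠ u in 𝓝 v₁, 0 < QQx p q u v₂ := hc.eventually (eventually_gt_nhds hv)
  have heq : (fun u => deriv (fun w => hInt lam p q u w) v₂) =ᶠ[nhds v₁]
      (fun u => aS2 p q + lam * G2x p q u v₂) :=
    hev.mono fun u hu => (hint2 lam p q u v₂ hA.ne' hu).deriv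
  rw [heq.deriv_eq]
  have hP : HasDerivAt
      (fun u => dN2x p q u v₂ * QQx p q u v₂ - NNx p q u v₂ * dQ2x p q u v₂ / 2)
      (4*q*p * QQx p q v₁ v₂ + dN2x p q v₁ v₂ * dQ1x p q v₁ v₂
        - (dN1x p q v₁ v₂ * dQ2x p q v₁ v₂ + NNx p q v₁ v₂ * (2*q*p)) / 2) v₁ :=
    ((hdN2_1 p q v₂ v₁).mul (hQ1 p q v₂ v₁)).sub
      (((hN1 p q v₂ v₁).mul (hdQ2_1 p q v₂ v₁)).div_const 2)
  have hL := L2 hP rfl (hQ1 p q v₂ v₁) rfl hv (pow_ne_zero 2 hA.ne')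
  exact ((hL.const_mul lam).const_add (aS2 p q)).deriv

lemma outH21 (lam p q v₁ v₂ : ℝ) (hA : 0 < AAx p q) (hv : 0 < QQx p q v₁ v₂) :
    H21 lam p q v₁ v₂ =
      lam * (((4*p*q * QQx p q v₁ v₂ + dN1x p q v₁ v₂ * dQ2x p q v₁ v₂
          - (dN2x p q v₁ v₂ * dQ1x p q v₁ v₂ + NNx p q v₁ v₂ * (2*p*q)) / 2)
            * QQx p q v₁ v₂
          - (3/2) * (dN1x p q v₁ v₂ * QQx p q v₁ v₂ - NNx p q v₁ v₂ * dQ1x p q v₁ v₂ / 2)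
            * dQ2x p q v₁ v₂)
        / (AAx p q ^ 2 * QQx p q v₁ v₂ ^ 2 * Real.sqrt (QQx p q v₁ v₂))) := by
  unfold H21
  have hc : ContinuousAt (fun w => QQx p q v₁ w) v₂ := by
    simp only [QQx, AAx, SSx]; fun_prop
  have hev : ∀ᶠ w in 𝓝 v₂, 0 < QQx p q v₁ w := hc.eventually (eventually_gt_nhds hv)
  have heq : (fun w => deriv (fun u => hInt lam p q u w) v₁) =ᶠ[nhds v₂]
      (fun w => aS1 p q + lam * G1x p q v₁ w) :=
    hev.mono fun w hw => (hint1 lam p q w v₁ hA.ne' hw).deriv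
  rw [heq.deriv_eq]
  have hP : HasDerivAt
      (fun w => dN1x p q v₁ w * QQx p q v₁ w - NNx p q v₁ w * dQ1x p q v₁ w / 2)
      (4*p*q * QQx p q v₁ v₂ + dN1x p q v₁ v₂ * dQ2x p q v₁ v₂
        - (dN2x p q v₁ v₂ * dQ1x p q v₁ v₂ + NNx p q v₁ v₂ * (2*p*q)) / 2) v₂ :=
    ((hdN1_2 p q v₁ v₂).mul (hQ2 p q v₁ v₂)).sub
      (((hN2 p q v₁ v₂).mul (hdQ1_2 p q v₁ v₂)).div_const 2)
  have hL := L2 hP rfl (hQ2 p q v₁ v₂) rfl hv (pow_ne_zero 2 hA.ne')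
  exact ((hL.const_mul lam).const_add (aS1 p q)).deriv

lemma outH22 (lam p q v₁ v₂ : ℝ) (hA : 0 < AAx p q) (hv : 0 < QQx p q v₁ v₂) :
    H22 lam p q v₁ v₂ =
      lam * ((((2 * AAx p q + 4*q*q) * QQx p q v₁ v₂ + dN2x p q v₁ v₂ * dQ2x p q v₁ v₂
          - (dN2x p q v₁ v₂ * dQ2x p q v₁ v₂ + NNx p q v₁ v₂ * (2 * AAx p q + 2*q*q)) / 2)
            * QQx p q v₁ v₂
          - (3/2) * (dN2x p q v₁ v₂ * QQx p q v₁ v₂ - NNx p q v₁ v₂ * dQ2x p q v₁ v₂ / 2)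
            * dQ2x p q v₁ v₂)
        / (AAx p q ^ 2 * QQx p q v₁ v₂ ^ 2 * Real.sqrt (QQx p q v₁ v₂))) := by
  unfold H22
  have hc : ContinuousAt (fun w => QQx p q v₁ w) v₂ := by
    simp only [QQx, AAx, SSx]; fun_prop
  have hev : ∀ᶠ w in 𝓝 v₂, 0 < QQx p q v₁ w := hc.eventually (eventually_gt_nhds hv)
  have heq : (fun w => deriv (fun u => hInt lam p q v₁ u) w) =ᶠ[nhds v₂]
      (fun w => aS2 p q + lam * G2x p q v₁ w) :=
    hev.mono fun w hw => (hint2 lam p q v₁ w hA.ne' hw).deriv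
  rw [heq.deriv_eq]
  have hP : HasDerivAt
      (fun w => dN2x p q v₁ w * QQx p q v₁ w - NNx p q v₁ w * dQ2x p q v₁ w / 2)
      ((2 * AAx p q + 4*q*q) * QQx p q v₁ v₂ + dN2x p q v₁ v₂ * dQ2x p q v₁ v₂
        - (dN2x p q v₁ v₂ * dQ2x p q v₁ v₂ + NNx p q v₁ v₂ * (2 * AAx p q + 2*q*q)) / 2) v₂ :=
    ((hdN2_2 p q v₁ v₂).mul (hQ2 p q v₁ v₂)).sub
      (((hN2 p q v₁ v₂).mul (hdQ2_2 p q v₁ v₂)).div_const 2)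
  have hL := L2 hP rfl (hQ2 p q v₁ v₂) rfl hv (pow_ne_zero 2 hA.ne')
  exact ((hL.const_mul lam).const_add (aS2 p q)).deriv

set_option maxHeartbeats 1600000 in
theorem stmt_17 (a t : ℝ) (ha0 : 0 < a) (ha1 : a < 1)
    (lam₀ : ℝ) (hlam : lam₀ = -2*a*(1 - a^2) ^ ((5:ℝ)/2) / (6*a^4 + 7*a^2 + 2)) :
    (∀ y₁ y₂ : ℝ,
      H11 lam₀ (a * Real.cos t) (a * Real.sin t) (-a * Real.sin t) (a * Real.cos t) * y₁ * y₁
        + H12 lam₀ (a * Real.cos t) (a * Real.sin t) (-a * Real.sin t) (a * Real.cos t) * y₁ * y₂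
        + H21 lam₀ (a * Real.cos t) (a * Real.sin t) (-a * Real.sin t) (a * Real.cos t) * y₂ * y₁
        + H22 lam₀ (a * Real.cos t) (a * Real.sin t) (-a * Real.sin t) (a * Real.cos t) * y₂ * y₂
      = (lam₀ * (2*a^2 + 1) / (a * (1 - a^2) ^ ((5:ℝ)/2)))
          * (Real.cos t * y₁ + Real.sin t * y₂)^2)
    ∧
    (∀ y₁ y₂ : ℝ, Real.cos t * y₁ + Real.sin t * y₂ ≠ 0 →
      H11 lam₀ (a * Real.cos t) (a * Real.sin t) (-a * Real.sin t) (a * Real.cos t) * y₁ * y₁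
        + H12 lam₀ (a * Real.cos t) (a * Real.sin t) (-a * Real.sin t) (a * Real.cos t) * y₁ * y₂
        + H21 lam₀ (a * Real.cos t) (a * Real.sin t) (-a * Real.sin t) (a * Real.cos t) * y₂ * y₁
        + H22 lam₀ (a * Real.cos t) (a * Real.sin t) (-a * Real.sin t) (a * Real.cos t) * y₂ * y₂
      < 0) := by
  have hp2 : (a*Real.cos t)^2 + (a*Real.sin t)^2 = a^2 := by
    linear_combination a^2 * (Real.sin_sq_add_cos_sq t)
  set p := a * Real.cos t with hp
  set q := a * Real.sin t with hq
  have hA1 : (0:ℝ) < 1 - a^2 := by nlinarith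
  have hAeq : AAx p q = 1 - a^2 := by simp only [AAx]; linear_combination -hp2
  have hA : 0 < AAx p q := by rw [hAeq]; exact hA1
  have hQeq : QQx p q (-q) p = (1-a^2)*a^2 := by
    simp only [QQx, AAx, SSx]
    linear_combination (1 - p^2 - q^2 - a^2) * hp2
  have hQpos : 0 < QQx p q (-q) p := by rw [hQeq]; positivity
  have hNeq : NNx p q (-q) p = (1-a^2)*a^2 := by
    simp only [NNx, AAx, SSx]
    linear_combination (1 - p^2 - q^2 - a^2) * hp2
  have hdN1 : dN1x p q (-q) p = -2*(1-a^2)*q := by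
    simp only [dN1x, AAx, SSx]
    linear_combination 2*q*hp2
  have hdQ1 : dQ1x p q (-q) p = -2*(1-a^2)*q := by
    simp only [dQ1x, AAx, SSx]
    linear_combination 2*q*hp2
  have hdN2 : dN2x p q (-q) p = 2*(1-a^2)*p := by
    simp only [dN2x, AAx, SSx]
    linear_combination (-2*p)*hp2
  have hdQ2 : dQ2x p q (-q) p = 2*(1-a^2)*p := by
    simp only [dQ2x, AAx, SSx]
    linear_combination (-2*p)*hp2
  have hsqrt : Real.sqrt (QQx p q (-q) p) = Real.sqrt (1-a^2) * a := by
    rw [hQeq, Real.sqrt_mul hA1.le, Real.sqrt_sq ha0.le]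
  set s := Real.sqrt (1-a^2) with hsdef
  have hs : 0 < s := Real.sqrt_pos.2 hA1
  have ha' : a ≠ 0 := ha0.ne'
  have hA' : (1:ℝ) - a^2 ≠ 0 := hA1.ne'
  set CF := lam₀ * (2*a^2+1) / (a^3 * (1-a^2)^2 * s) with hCF
  have e11 : H11 lam₀ p q (-q) p = CF * (p*p) := by
    rw [outH11 lam₀ p q (-q) p hA hQpos, hsqrt, hAeq, hQeq, hNeq, hdN1, hdQ1, hCF]
    field_simp
    linear_combination (lam₀*a^2*(a^2-1)) * (Real.sin_sq_add_cos_sq t)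
  have e12 : H12 lam₀ p q (-q) p = CF * (p*q) := by
    rw [outH12 lam₀ p q (-q) p hA hQpos, hsqrt, hAeq, hQeq, hNeq, hdN1, hdQ1, hdN2, hdQ2, hCF]
    field_simp
    linear_combination (0:ℝ) * hp2
  have e21 : H21 lam₀ p q (-q) p = CF * (p*q) := by
    rw [outH21 lam₀ p q (-q) p hA hQpos, hsqrt, hAeq, hQeq, hNeq, hdN1, hdQ1, hdN2, hdQ2, hCF]
    field_simp
    linear_combination (0:ℝ) * hp2
  have e22 : H22 lam₀ p q (-q) p = CF * (q*q) := by
    rw [outH22 lam₀ p q (-q) p hA hQpos, hsqrt, hAeq, hQeq, hNeq, hdN2, hdQ2, hCF]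
    field_simp
    linear_combination (lam₀*a^2*(a^2-1)) * (Real.sin_sq_add_cos_sq t)
  have h52 : (1 - a^2:ℝ) ^ ((5:ℝ)/2) = (1-a^2)^2 * s := by
    rw [hsdef, Real.sqrt_eq_rpow, show ((5:ℝ)/2) = ((2:ℕ):ℝ) + (1/2:ℝ) by norm_num,
      Real.rpow_add hA1, Real.rpow_natCast]
  have harg : -a * Real.sin t = -q := by rw [hq]; ring
  rw [harg]
  have key : ∀ y₁ y₂ : ℝ,
      H11 lam₀ p q (-q) p * y₁ * y₁ + H12 lam₀ p q (-q) p * y₁ * y₂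
        + H21 lam₀ p q (-q) p * y₂ * y₁ + H22 lam₀ p q (-q) p * y₂ * y₂
      = (lam₀ * (2*a^2 + 1) / (a * (1 - a^2) ^ ((5:ℝ)/2))) * (Real.cos t * y₁ + Real.sin t * y₂)^2 := by
    intro y₁ y₂
    rw [e11, e12, e21, e22, h52]
    have hpy : p = a * Real.cos t := hp
    have hqy : q = a * Real.sin t := hq
    rw [hCF, hpy, hqy]
    field_simp
    ring
  refine ⟨key, fun y₁ y₂ hy => ?_⟩
  rw [key y₁ y₂]
  have hrp : 0 < (1 - a^2:ℝ) ^ ((5:ℝ)/2) := Real.rpow_pos_of_pos hA1 _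
  have hlamneg : lam₀ < 0 := by
    rw [hlam]
    apply div_neg_of_neg_of_pos
    · linarith [mul_pos ha0 hrp]
    · positivity
  have hcoeff : lam₀ * (2*a^2 + 1) / (a * (1 - a^2) ^ ((5:ℝ)/2)) < 0 := by
    apply div_neg_of_neg_of_pos
    · exact mul_neg_of_neg_of_pos hlamneg (by positivity)
    · exact mul_pos ha0 hrp
  have hsq : 0 < (Real.cos t * y₁ + Real.sin t * y₂)^2 :=
    lt_of_le_of_ne (sq_nonneg _) (Ne.symm (pow_ne_zero 2 hy))
  exact mul_neg_of_neg_of_pos hcoeff hsq
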